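/- arXiv:2412.13715 — 2 statements merged into one kernel-verified Lean document; each statement's English description precedes it below -/
import Mathlib

section
/- Under the quadratic model, the SAM iterates satisfy the recursion ∇L(w̃_t) = (I - ηH)∇L(w̃_{t-1}) - ηH²ε_{t-1}, where ε_{t-1} = ρ∇L(w̃_{t-1})/‖∇L(w̃_{t-1})‖ and the update is w̃_t = w̃_{t-1} - η∇L(w̃_{t-1} + ε_{t-1}). Consequently, for a unit eigenvector v of H with eigenvalue λ, ⟨v, ∇L(w̃_t)⟩ = (1 - ηλ - ηρλ²/‖∇L(w̃_{t-1})‖) ⟨v, ∇L(w̃_{t-1})⟩. -/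
open scoped RealInnerProductSpace

/-- Under the quadratic model, SAM iterates satisfy
`∇L(w̃_{t+1}) = (I - ηH)∇L(w̃_t) - ηH²ε_t` with `ε_t = ρ∇L(w̃_t)/‖∇L(w̃_t)‖`, and for a
unit eigenvector `v` of `H` with eigenvalue `λ`,
`⟨v, ∇L(w̃_{t+1})⟩ = (1 - ηλ - ηρλ²/‖∇L(w̃_t)‖)⟨v, ∇L(w̃_t)⟩`. -/
theorem sam_quadratic_recursion
    {d : ℕ} (η ρ lam : ℝ) (hη : 0 < η) (hρ : 0 < ρ)
    (H : EuclideanSpace ℝ (Fin d) →ₗ[ℝ] EuclideanSpace ℝ (Fin d))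
    (hsym : ∀ x y : EuclideanSpace ℝ (Fin d), ⟪H x, y⟫ = ⟪x, H y⟫)
    (v : EuclideanSpace ℝ (Fin d)) (hv : ‖v‖ = 1) (heig : H v = lam • v)
    (w : ℕ → EuclideanSpace ℝ (Fin d))
    (gradL : EuclideanSpace ℝ (Fin d) → EuclideanSpace ℝ (Fin d))
    (hgrad : ∀ x, gradL x = gradL (w 0) + H (x - w 0))
    (hne : ∀ t : ℕ, gradL (w t) ≠ 0)
    (ε : ℕ → EuclideanSpace ℝ (Fin d))
    (hε : ∀ t : ℕ, ε t = (ρ / ‖gradL (w t)‖) • gradL (w t))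
    (hupd : ∀ t : ℕ, w (t + 1) = w t - η • gradL (w t + ε t)) :
    ∀ t : ℕ,
      gradL (w (t + 1)) = (1 - η • H) (gradL (w t)) - η • H (H (ε t)) ∧
      ⟪v, gradL (w (t + 1))⟫ =
        (1 - η * lam - η * ρ * lam ^ 2 / ‖gradL (w t)‖) * ⟪v, gradL (w t)⟫ := by
  intro t
  have hdiff : ∀ a b, gradL a - gradL b = H (a - b) := by
    intro a b
    rw [hgrad a, hgrad b,
      show gradL (w 0) + H (a - w 0) - (gradL (w 0) + H (b - w 0))
        = H (a - w 0) - H (b - w 0) by abel,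
      ← map_sub, show a - w 0 - (b - w 0) = a - b by abel]
  have hpert : gradL (w t + ε t) = gradL (w t) + H (ε t) := by
    have := hdiff (w t + ε t) (w t)
    rw [show w t + ε t - w t = ε t by abel] at this
    linear_combination (norm := module) this
  have h1 : gradL (w (t + 1)) = (1 - η • H) (gradL (w t)) - η • H (H (ε t)) := by
    have harg : w (t + 1) - w t = -(η • (gradL (w t) + H (ε t))) := by
      rw [hupd t, hpert]; abel
    have key := hdiff (w (t + 1)) (w t)
    rw [harg, map_neg, map_smul, map_add] at key
    simp only [LinearMap.sub_apply, Module.End.one_apply, LinearMap.smul_apply]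
    linear_combination (norm := module) key
  refine ⟨h1, ?_⟩
  have hvH : ∀ x, ⟪v, H x⟫ = lam * ⟪v, x⟫ := by
    intro x
    rw [← hsym, heig, real_inner_smul_left]
  have hn : ‖gradL (w t)‖ ≠ 0 := norm_ne_zero_iff.mpr (hne t)
  rw [h1]
  simp only [LinearMap.sub_apply, Module.End.one_apply, LinearMap.smul_apply]
  rw [inner_sub_right, inner_sub_right, real_inner_smul_right, real_inner_smul_right,
    hvH, hvH, hvH, hε, real_inner_smul_right]
  field_simp
end

section
/- Under the quadratic model where the tail Hessian is H_tail = rH for 0 < r < 1, the ImbSAM iterates w'_t = w'_{t-1} − η(∇L_head(w'_{t-1}) + ∇L_tail(w'_{t-1} + ρ∇L_tail(w'_{t-1})/‖∇L_tail(w'_{t-1})‖)) satisfy the recursion ∇L(w'_t) = (I − ηH)∇L(w'_{t-1}) − ηrH²·ε_{tail,t-1}, where ε_{tail,t-1} = ρ∇L_tail(w'_{t-1})/‖∇L_tail(w'_{t-1})‖. Consequently, for a unit eigenvector v of H with eigenvalue λ, and assuming ∇L_tail = r∇L along the trajectory, ⟨v, ∇L(w'_t)⟩ = (1 − ηλ −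 ηr²ρλ²/‖∇L_tail(w'_{t-1})‖)·⟨v, ∇L(w'_{t-1})⟩. -/
open scoped RealInnerProductSpace

/-- Under the quadratic model with tail Hessian `H_tail = rH`
(`0 < r < 1`) and proportional tail gradient `∇L_tail = r∇L`, the ImbSAM iterates
satisfy `∇L(w'_{t+1}) = (I − ηH)∇L(w'_t) − ηr H² ε_{tail,t}` with
`ε_{tail,t} = ρ∇L_tail(w'_t)/‖∇L_tail(w'_t)‖`, and for a unit eigenvector `v` of `H`
with eigenvalue `λ`,
`⟨v, ∇L(w'_{t+1})⟩ = (1 − ηλ − ηr²ρλ²/‖∇L_tail(w'_t)‖)⟨v, ∇L(w'_t)⟩`. -/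
theorem imbsam_quadratic_recursion
    {d : ℕ} (η ρ r lam : ℝ) (hη : 0 < η) (hρ : 0 < ρ) (hr0 : 0 < r) (hr1 : r < 1)
    (H : EuclideanSpace ℝ (Fin d) →ₗ[ℝ] EuclideanSpace ℝ (Fin d))
    (hsym : ∀ x y : EuclideanSpace ℝ (Fin d), ⟪H x, y⟫ = ⟪x, H y⟫)
    (v : EuclideanSpace ℝ (Fin d)) (hv : ‖v‖ = 1) (heig : H v = lam • v)
    (w : ℕ → EuclideanSpace ℝ (Fin d))
    (gradL gradLtail gradLhead :
      EuclideanSpace ℝ (Fin d) → EuclideanSpace ℝ (Fin d))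
    (hgrad : ∀ x, gradL x = gradL (w 0) + H (x - w 0))
    (htail : ∀ x, gradLtail x = r • gradL x)
    (hhead : ∀ x, gradLhead x = gradL x - gradLtail x)
    (hne : ∀ t : ℕ, gradL (w t) ≠ 0)
    (ε : ℕ → EuclideanSpace ℝ (Fin d))
    (hε : ∀ t : ℕ, ε t = (ρ / ‖gradLtail (w t)‖) • gradLtail (w t))
    (hupd : ∀ t : ℕ,
      w (t + 1) = w t - η • (gradLhead (w t) + gradLtail (w t + ε t))) :
    ∀ t : ℕ,
      gradL (w (t + 1)) = (1 - η • H) (gradL (w t)) - (η * r) • H (H (ε t)) ∧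
      ⟪v, gradL (w (t + 1))⟫ =
        (1 - η * lam - η * r ^ 2 * ρ * lam ^ 2 / ‖gradLtail (w t)‖) *
          ⟪v, gradL (w t)⟫ := by
  intro t
  set g := gradL (w t) with hg
  have hdiff : ∀ x y : EuclideanSpace ℝ (Fin d), gradL x = gradL y + H (x - y) := by
    intro x y
    rw [hgrad x, hgrad y]
    have : H (x - w 0) = H (y - w 0) + H (x - y) := by
      rw [← map_add]; congr 1; abel
    rw [this]; abel
  have key : gradL (w (t+1)) = g - η • H g - (η * r) • H (H (ε t)) := by
    rw [hdiff (w (t+1)) (w t), hupd t]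
    have h1 : gradLtail (w t + ε t) = r • g + r • H (ε t) := by
      rw [htail, hdiff (w t + ε t) (w t)]
      simp [smul_add]
      rfl
    have h2 : gradLhead (w t) = g - r • g := by rw [hhead, htail]
    have : w t - η • (gradLhead (w t) + gradLtail (w t + ε t)) - w t
        = -(η • (g + r • H (ε t))) := by
      rw [h1, h2]
      simp only [smul_add, smul_sub, ← hg]
      abel
    rw [this]
    simp only [map_neg, map_smul, map_add, smul_add, smul_smul]
    abel
  have hfirst : gradL (w (t + 1)) = (1 - η • H) g - (η * r) • H (H (ε t)) := by
    rw [key]; simp [sub_smul]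
  refine ⟨hfirst, ?_⟩
  have hεt : ε t = (ρ * r / ‖gradLtail (w t)‖) • g := by
    rw [hε t, htail (w t), ← hg, smul_smul]
    ring_nf
  have hvH : ∀ x, ⟪v, H x⟫ = lam * ⟪v, x⟫ := by
    intro x
    rw [← hsym, heig, inner_smul_left]
    simp
  rw [key]
  rw [inner_sub_right, inner_sub_right, inner_smul_right, inner_smul_right,
    hvH, hvH, hvH, hεt, inner_smul_right]
  have hnz : ‖gradLtail (w t)‖ ≠ 0 := by
    rw [htail]
    simpa using ⟨hr0.ne', hne t⟩
  field_simp
end
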